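/- If non-negative integers n1 ≥ n2 ≥ 0 and a1 ≥ a2 ≥ a3 ≥ 0 with n1 > 100 satisfy B_{n1} + B_{n2} = 2^{a1} + 2^{a2} + 2^{a3}, then |1 − α^{−n1}·2^{a2}·4√2·(2^{a1−a2} + 1)| < 13.57 · max{2^{a3−a1}, α^{n2−n1}}, where α = 3 + 2√2. -/
import Mathlib


/-- The balancing numbers: `B 0 = 0`, `B 1 = 1`, `B (n+2) = 6 * B (n+1) - B n`. -/
def balancing : ℕ → ℤ
  | 0 => 0
  | 1 => 1
  | n + 2 => 6 * balancing (n + 1) - balancing n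

lemma balancing_aux : ∀ n : ℕ, 0 ≤ balancing n ∧ balancing n ≤ balancing (n + 1) := by
  intro n
  induction n with
  | zero => simp [balancing]
  | succ k ih =>
    obtain ⟨h0, h1⟩ := ih
    refine ⟨by linarith, ?_⟩
    show balancing (k + 1) ≤ 6 * balancing (k + 1) - balancing k
    linarith

lemma balancing_mono : Monotone balancing :=
  monotone_nat_of_le_succ fun n => (balancing_aux n).2

lemma binet : ∀ n : ℕ,
    (3 + 2 * Real.sqrt 2) ^ n - (3 - 2 * Real.sqrt 2) ^ n = 4 * Real.sqrt 2 * (balancing n : ℝ)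
  | 0 => by simp [balancing]
  | 1 => by simp [balancing]; ring
  | (n + 2) => by
    have h1 := binet n
    have h2 := binet (n + 1)
    have hs : Real.sqrt 2 ^ 2 = 2 := Real.sq_sqrt (by norm_num)
    have e : (balancing (n + 2) : ℝ) = 6 * (balancing (n + 1) : ℝ) - (balancing n : ℝ) := by
      show ((6 * balancing (n + 1) - balancing n : ℤ) : ℝ) = _
      push_cast; ring
    rw [e]
    have pa1 : (3 + 2 * Real.sqrt 2) ^ (n + 1) = (3 + 2 * Real.sqrt 2) ^ n * (3 + 2 * Real.sqrt 2) := by ring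
    have pb1 : (3 - 2 * Real.sqrt 2) ^ (n + 1) = (3 - 2 * Real.sqrt 2) ^ n * (3 - 2 * Real.sqrt 2) := by ring
    rw [pa1, pb1] at h2
    have pa : (3 + 2 * Real.sqrt 2) ^ (n + 2) = (3 + 2 * Real.sqrt 2) ^ n * ((3 + 2 * Real.sqrt 2) * (3 + 2 * Real.sqrt 2)) := by ring
    have pb : (3 - 2 * Real.sqrt 2) ^ (n + 2) = (3 - 2 * Real.sqrt 2) ^ n * ((3 - 2 * Real.sqrt 2) * (3 - 2 * Real.sqrt 2)) := by ring
    have ha2 : (3 + 2 * Real.sqrt 2) * (3 + 2 * Real.sqrt 2) = 6 * (3 + 2 * Real.sqrt 2) - 1 := by nlinarith [hs]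
    have hb2 : (3 - 2 * Real.sqrt 2) * (3 - 2 * Real.sqrt 2) = 6 * (3 - 2 * Real.sqrt 2) - 1 := by nlinarith [hs]
    rw [pa, pb, ha2, hb2]
    linear_combination 6 * h2 - h1

/-- Main arithmetic estimate with opaque variables. -/
lemma aux_bound (s P Q x1 x2 x3 b1 b2 : ℝ)
    (hsp : 0 < s)
    (hx1 : 0 < x1) (hx2 : 0 < x2) (hx3 : 0 < x3)
    (hP1 : 1 ≤ P) (hQ1 : 1 ≤ Q)
    (hb1 : 4 * s * b1 = P - P⁻¹) (hb2 : 4 * s * b2 = Q - Q⁻¹)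
    (heqR : b1 + b2 = x1 + x2 + x3)
    (hbmono : b2 ≤ b1) :
    |1 - P⁻¹ * (4 * s) * (x1 + x2)| < 13.57 * max (x3 * x1⁻¹) (P⁻¹ * Q) := by
  have hP0 : (0:ℝ) < P := lt_of_lt_of_le one_pos hP1
  have hQ0 : (0:ℝ) < Q := lt_of_lt_of_le one_pos hQ1
  set u : ℝ := P⁻¹ with hudef
  set v : ℝ := Q⁻¹ with hvdef
  set w : ℝ := x1⁻¹ with hwdef
  have hu0 : 0 < u := inv_pos.2 hP0
  have hv0 : 0 < v := inv_pos.2 hQ0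
  have hw0 : 0 < w := inv_pos.2 hx1
  have hu1 : u ≤ 1 := inv_le_one_of_one_le₀ hP1
  have hv1 : v ≤ 1 := inv_le_one_of_one_le₀ hQ1
  have huP : P * u = 1 := mul_inv_cancel₀ hP0.ne'
  have hvQ : Q * v = 1 := mul_inv_cancel₀ hQ0.ne'
  have hwx : x1 * w = 1 := mul_inv_cancel₀ hx1.ne'
  clear_value u v w
  -- key inequality : 2 s x1 < P
  have key : 2 * s * x1 < P := by
    have h1 : 4 * s * b1 < P := by rw [hb1]; linarith
    have h2 : 2 * s * (x1 + x2 + x3) ≤ 4 * s * b1 := by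
      rw [← heqR]
      nlinarith [mul_nonneg hsp.le (sub_nonneg.2 hbmono)]
    have h3 : 2 * s * x1 < 2 * s * (x1 + x2 + x3) := by
      nlinarith [mul_pos hsp hx2, mul_pos hsp hx3]
    linarith
  have h2su : 2 * s * u < w := by
    have hmul := mul_lt_mul_of_pos_right key (mul_pos hu0 hw0)
    have e1 : (2 * s * x1) * (u * w) = 2 * s * u := by linear_combination (2 * s * u) * hwx
    have e2 : P * (u * w) = w := by linear_combination w * huP
    linarith
  have t3 : 4 * s * x3 * u < 2 * (x3 * w) := by
    nlinarith [mul_lt_mul_of_pos_left h2su hx3]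
  have hE : 1 - u * (4 * s) * (x1 + x2) = u * u - u * Q + u * v + 4 * s * x3 * u := by
    linear_combination (4 * s * u) * heqR - u * hb1 - u * hb2 - huP
  have t1 : u * u ≤ u * Q := by
    nlinarith [mul_nonneg hu0.le (by linarith : (0:ℝ) ≤ Q - u)]
  have t2 : u * v ≤ u * Q := by
    nlinarith [mul_nonneg hu0.le (by linarith : (0:ℝ) ≤ Q - v)]
  have hTM : u * Q ≤ max (x3 * w) (u * Q) := le_max_right _ _
  have hDM : x3 * w ≤ max (x3 * w) (u * Q) := le_max_left _ _
  have hTpos : 0 < u * Q := mul_pos hu0 hQ0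
  have hMpos : 0 < max (x3 * w) (u * Q) := lt_of_lt_of_le hTpos hTM
  have hlast : 0 < 4 * s * x3 * u := by positivity
  rw [hE, abs_lt]
  constructor
  · linarith [mul_pos hu0 hu0, mul_pos hu0 hv0]
  · linarith

set_option maxHeartbeats 1000000 in
theorem balancing_linear_form_bound_two (n1 n2 a1 a2 a3 : ℕ)
    (hn : n2 ≤ n1) (ha12 : a2 ≤ a1) (ha23 : a3 ≤ a2) (hn1 : 100 < n1)
    (heq : balancing n1 + balancing n2 = 2 ^ a1 + 2 ^ a2 + 2 ^ a3) :
    |1 - (3 + 2 * Real.sqrt 2) ^ (-(n1 : ℤ)) * 2 ^ a2 * (4 * Real.sqrt 2) *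
        ((2 : ℝ) ^ ((a1 : ℤ) - a2) + 1)| <
      13.57 * max ((2 : ℝ) ^ ((a3 : ℤ) - a1)) ((3 + 2 * Real.sqrt 2) ^ ((n2 : ℤ) - n1)) := by
  have hs2 : Real.sqrt 2 ^ 2 = 2 := Real.sq_sqrt (by norm_num)
  have hsp : (0 : ℝ) < Real.sqrt 2 := Real.sqrt_pos.2 (by norm_num)
  have hs15 : (1 : ℝ) < Real.sqrt 2 := by nlinarith
  have hα1 : (1 : ℝ) < 3 + 2 * Real.sqrt 2 := by linarith
  have hα0 : (0 : ℝ) < 3 + 2 * Real.sqrt 2 := by linarith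
  have hβ : (3 - 2 * Real.sqrt 2) = (3 + 2 * Real.sqrt 2)⁻¹ := by
    have hmul : (3 - 2 * Real.sqrt 2) * (3 + 2 * Real.sqrt 2) = 1 := by nlinarith [hs2]
    exact eq_inv_of_mul_eq_one_left hmul
  have hb1 : 4 * Real.sqrt 2 * (balancing n1 : ℝ)
      = (3 + 2 * Real.sqrt 2) ^ n1 - ((3 + 2 * Real.sqrt 2) ^ n1)⁻¹ := by
    have := binet n1
    rw [hβ, inv_pow] at this
    linarith
  have hb2 : 4 * Real.sqrt 2 * (balancing n2 : ℝ)
      = (3 + 2 * Real.sqrt 2) ^ n2 - ((3 + 2 * Real.sqrt 2) ^ n2)⁻¹ := by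
    have := binet n2
    rw [hβ, inv_pow] at this
    linarith
  have heqR : (balancing n1 : ℝ) + (balancing n2 : ℝ) = 2 ^ a1 + 2 ^ a2 + 2 ^ a3 := by
    exact_mod_cast congrArg (fun z : ℤ => (z : ℝ)) heq
  have hbmono : (balancing n2 : ℝ) ≤ (balancing n1 : ℝ) := by
    exact_mod_cast balancing_mono hn
  -- rewrite zpow terms
  have hzp : (3 + 2 * Real.sqrt 2) ^ (-(n1 : ℤ)) = ((3 + 2 * Real.sqrt 2) ^ n1)⁻¹ := by
    rw [zpow_neg, zpow_natCast]
  have hz2 : (2 : ℝ) ^ ((a1 : ℤ) - a2) = (2 : ℝ) ^ (a1 - a2 : ℕ) := by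
    rw [← zpow_natCast (2 : ℝ) (a1 - a2)]
    congr 1
    omega
  have hx : (2 : ℝ) ^ a2 * ((2 : ℝ) ^ (a1 - a2 : ℕ) + 1) = 2 ^ a1 + 2 ^ a2 := by
    have h1 : (2 : ℝ) ^ a2 * (2 : ℝ) ^ (a1 - a2 : ℕ) = 2 ^ a1 := by
      rw [← pow_add]
      congr 1
      omega
    linear_combination h1
  have harg : 1 - (3 + 2 * Real.sqrt 2) ^ (-(n1 : ℤ)) * 2 ^ a2 * (4 * Real.sqrt 2) *
        ((2 : ℝ) ^ ((a1 : ℤ) - a2) + 1)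
      = 1 - ((3 + 2 * Real.sqrt 2) ^ n1)⁻¹ * (4 * Real.sqrt 2) * ((2:ℝ) ^ a1 + (2:ℝ) ^ a2) := by
    rw [hzp, hz2]
    linear_combination (-(((3 + 2 * Real.sqrt 2) ^ n1)⁻¹ * (4 * Real.sqrt 2))) * hx
  have hDeq : (2 : ℝ) ^ ((a3 : ℤ) - a1) = (2:ℝ) ^ a3 * ((2:ℝ) ^ a1)⁻¹ := by
    rw [zpow_sub₀ (by norm_num : (2:ℝ) ≠ 0), zpow_natCast, zpow_natCast, div_eq_mul_inv]
  have hTeq : (3 + 2 * Real.sqrt 2) ^ ((n2 : ℤ) - n1)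
      = ((3 + 2 * Real.sqrt 2) ^ n1)⁻¹ * (3 + 2 * Real.sqrt 2) ^ n2 := by
    rw [zpow_sub₀ hα0.ne', zpow_natCast, zpow_natCast, div_eq_mul_inv]
    ring
  rw [harg, hDeq, hTeq]
  exact aux_bound (Real.sqrt 2) ((3 + 2 * Real.sqrt 2) ^ n1) ((3 + 2 * Real.sqrt 2) ^ n2)
    ((2:ℝ) ^ a1) ((2:ℝ) ^ a2) ((2:ℝ) ^ a3) (balancing n1 : ℝ) (balancing n2 : ℝ)
    hsp (by positivity) (by positivity) (by positivity)
    (one_le_pow₀ hα1.le) (one_le_pow₀ hα1.le)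
    hb1 hb2 heqR hbmono
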